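/- Let R be an allowed regular local k-algebra over a field k of characteristic 0. Then the ring of differential operators D_{R/k} is generated as a k-algebra by its first-order part D^1_{R/k} = R + T_{R/k}. -/

import Mathlib

/-!
For `P` of order `m + 1`, the map `(a₀, …, aₘ) ↦ [⋯[P, a₀], …, aₘ](1)` is symmetric and a
derivation in each argument, and it vanishes identically only if `P` has order `m`. Conversely,
every symmetric multiderivation `φ` in `r` arguments is such a symbol of an operator in the
algebra generated by `D¹`: expanding the derivation `a ↦ φ(a, w)` in a basis `∂ᵢ` of `T_{R/k}`
gives coefficients `χᵢ(w)` that are symmetric multiderivations in `r - 1` arguments, and if `Qᵢ`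
has symbol `χᵢ` then `∑ᵢ Qᵢ ∂ᵢ` has symbol `r • φ`, one copy for each argument that `∂ᵢ` can
act on; in characteristic zero we may divide by `r`. Subtracting such an operator from `P`
lowers its order, so induction on the order finishes the proof.
-/

open IsLocalRing

universe u v

/-- The filtration `D^m_{R/k} ⊆ End_k(R)` of differential operators: `D^0` consists of the
multiplication operators by elements of `R`, and
`D^{m+1} = {P ∈ End_k(R) : [P, a] ∈ D^m for all a ∈ R}`. -/
def diffOp (k : Type u) (R : Type v) [CommRing k] [CommRing R] [Algebra k R] :
    ℕ → Set (Module.End k R)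
  | 0 => Set.range (Algebra.lmul k R)
  | m + 1 => {P | ∀ r : R, P * Algebra.lmul k R r - Algebra.lmul k R r * P ∈ diffOp k R m}

theorem Module.Basis.sum_coord_mul_apply {k R ι : Type*} [CommRing k] [CommRing R]
    [Algebra k R] [Fintype ι] (B : Module.Basis ι R (Derivation k R R)) (D : Derivation k R R)
    (a : R) :
    ∑ i, B.coord i D * B i a = D a := by
  conv_rhs => rw [← B.sum_repr D, ← Derivation.coeFnAddMonoidHom_apply, map_sum,
    Finset.sum_apply]
  simp [Derivation.coeFnAddMonoidHom_apply]

namespace DiffOp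

section CommRing

variable {k : Type u} {R : Type v} [CommRing k] [CommRing R] [Algebra k R]

variable (k R) in
noncomputable def adMul : R →ₗ[k] Module.End k (Module.End k R) :=
  LinearMap.mk₂ k (fun a X => X * Algebra.lmul k R a - Algebra.lmul k R a * X)
    (fun a b X => by simp only [map_add, mul_add, add_mul]; abel)
    (fun c a X => by simp only [map_smul, mul_smul_comm, smul_mul_assoc, smul_sub])
    (fun a X Y => by simp only [add_mul, mul_add]; abel)
    (fun c a X => by simp only [smul_mul_assoc, mul_smul_comm, smul_sub])

theorem adMul_apply (a : R) (X : Module.End k R) :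
    adMul k R a X = X * Algebra.lmul k R a - Algebra.lmul k R a * X := rfl

theorem mem_diffOp_succ {m : ℕ} {P : Module.End k R} :
    P ∈ diffOp k R (m + 1) ↔ ∀ r, adMul k R r P ∈ diffOp k R m := Iff.rfl

theorem adMul_apply_lmul (a b : R) : adMul k R a (Algebra.lmul k R b) = 0 := by
  rw [adMul_apply, ← map_mul, ← map_mul, mul_comm, sub_self]

theorem adMul_apply_mul (a : R) (X Y : Module.End k R) :
    adMul k R a (X * Y) = X * adMul k R a Y + adMul k R a X * Y := by
  simp only [adMul_apply, mul_sub, sub_mul, mul_assoc]; abel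

theorem adMul_apply_mul_lmul (a b : R) (X : Module.End k R) :
    adMul k R a (X * Algebra.lmul k R b) = adMul k R a X * Algebra.lmul k R b := by
  rw [adMul_apply_mul, adMul_apply_lmul, mul_zero, zero_add]

theorem adMul_apply_lmul_mul (a b : R) (X : Module.End k R) :
    adMul k R a (Algebra.lmul k R b * X) = Algebra.lmul k R b * adMul k R a X := by
  rw [adMul_apply_mul, adMul_apply_lmul, zero_mul, add_zero]

theorem adMul_mul_apply (a b : R) (X : Module.End k R) :
    adMul k R (a * b) X =
      adMul k R a X * Algebra.lmul k R b + Algebra.lmul k R a * adMul k R b X := by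
  simp only [adMul_apply, map_mul, sub_mul, mul_sub, mul_assoc, sub_add_sub_cancel]

theorem commute_adMul (a b : R) : Commute (adMul k R a) (adMul k R b) := by
  ext X : 1
  simp only [Module.End.mul_apply, adMul_apply, mul_sub, sub_mul, mul_assoc]
  simp only [← mul_assoc (Algebra.lmul k R _) (Algebra.lmul k R _), ← map_mul, mul_comm b a]
  abel

theorem adMul_apply_derivation (a : R) (D : Derivation k R R) :
    adMul k R a (D : Module.End k R) = Algebra.lmul k R (D a) := by
  ext y
  simp [adMul_apply, Derivation.leibniz]
  ring

variable (k R) in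
noncomputable def diffOpSubmodule : ℕ → Submodule k (Module.End k R)
  | 0 => LinearMap.range (Algebra.lmul k R).toLinearMap
  | m + 1 => ⨅ r : R, (diffOpSubmodule m).comap (adMul k R r)

theorem mem_diffOpSubmodule {m : ℕ} {P : Module.End k R} :
    P ∈ diffOpSubmodule k R m ↔ P ∈ diffOp k R m := by
  induction m generalizing P with
  | zero => rfl
  | succ m ih => simp [diffOpSubmodule, Submodule.mem_iInf, ih, mem_diffOp_succ]

theorem zero_mem_diffOp (m : ℕ) : (0 : Module.End k R) ∈ diffOp k R m :=
  mem_diffOpSubmodule.1 (zero_mem _)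

theorem eq_lmul_apply_one {X : Module.End k R} (hX : X ∈ diffOp k R 0) :
    X = Algebra.lmul k R (X 1) := by
  obtain ⟨a, rfl⟩ := hX
  simp

theorem mem_diffOp_zero_iff {X : Module.End k R} :
    X ∈ diffOp k R 0 ↔ ∀ r, adMul k R r X = 0 := by
  refine ⟨fun ⟨a, ha⟩ r => ha ▸ adMul_apply_lmul r a, fun h => ⟨X 1, ?_⟩⟩
  ext r
  have hr : X r - r * X 1 = 0 := by simpa [adMul_apply] using congr($(h r) 1)
  simpa [mul_comm] using (sub_eq_zero.1 hr).symm

theorem diffOp_subset_succ : ∀ m : ℕ, diffOp k R m ⊆ diffOp k R (m + 1)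
  | 0 => fun _ hX => mem_diffOp_succ.2 fun r => by
      rw [mem_diffOp_zero_iff.1 hX r]; exact zero_mem_diffOp 0
  | m + 1 => fun _ hX => mem_diffOp_succ.2 fun r => diffOp_subset_succ m (hX r)

theorem adMul_mem_diffOp_pred {m : ℕ} {X : Module.End k R} (hX : X ∈ diffOp k R m) (r : R) :
    adMul k R r X ∈ diffOp k R (m - 1) := by
  cases m with
  | zero => rw [mem_diffOp_zero_iff.1 hX r]; exact zero_mem_diffOp 0
  | succ m => exact hX r

theorem mul_mem_diffOp {a b : ℕ} {P Q : Module.End k R} (hP : P ∈ diffOp k R a)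
    (hQ : Q ∈ diffOp k R b) : P * Q ∈ diffOp k R (a + b) := by
  induction hn : a + b generalizing a b P Q with
  | zero =>
    obtain ⟨rfl, rfl⟩ := Nat.add_eq_zero_iff.1 hn
    obtain ⟨x, rfl⟩ := hP
    obtain ⟨y, rfl⟩ := hQ
    exact ⟨x * y, map_mul _ _ _⟩
  | succ n ih =>
    refine mem_diffOp_succ.2 fun r => ?_
    rw [adMul_apply_mul, ← mem_diffOpSubmodule]
    refine add_mem (mem_diffOpSubmodule.2 ?_) (mem_diffOpSubmodule.2 ?_)
    · cases b with
      | zero => rw [mem_diffOp_zero_iff.1 hQ r, mul_zero]; exact zero_mem_diffOp n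
      | succ b => exact ih hP (hQ r) (by omega)
    · cases a with
      | zero => rw [mem_diffOp_zero_iff.1 hP r, zero_mul]; exact zero_mem_diffOp n
      | succ a => exact ih (hP r) hQ (by omega)

theorem derivation_mem_diffOp_one (D : Derivation k R R) :
    (D : Module.End k R) ∈ diffOp k R 1 :=
  mem_diffOp_succ.2 fun r => (adMul_apply_derivation r D).symm ▸ ⟨D r, rfl⟩

instance : LeftCommutative fun (a : R) (L : Module.End k (Module.End k R)) => adMul k R a * L :=
  ⟨fun a b L => by rw [← mul_assoc, (commute_adMul a b).eq, mul_assoc]⟩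

variable (k R) in
noncomputable def iterAdMul (s : Multiset R) : Module.End k (Module.End k R) :=
  s.foldr (fun a L => adMul k R a * L) 1

@[simp]
theorem iterAdMul_zero : iterAdMul k R 0 = 1 :=
  Multiset.foldr_zero _ _

theorem iterAdMul_cons (a : R) (s : Multiset R) :
    iterAdMul k R (a ::ₘ s) = adMul k R a * iterAdMul k R s :=
  Multiset.foldr_cons _ _ _ _

theorem commute_adMul_iterAdMul (a : R) (s : Multiset R) :
    Commute (adMul k R a) (iterAdMul k R s) := by
  induction s using Multiset.induction_on with
  | empty => simp
  | cons b s ih => rw [iterAdMul_cons]; exact (commute_adMul a b).mul_right ih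

theorem iterAdMul_mem_diffOp {j : ℕ} {s : Multiset R} {X : Module.End k R}
    (hX : X ∈ diffOp k R (j + Multiset.card s)) : iterAdMul k R s X ∈ diffOp k R j := by
  induction s using Multiset.induction_on generalizing j with
  | empty => simpa using hX
  | cons a s ih =>
    rw [Multiset.card_cons, ← add_assoc, add_right_comm] at hX
    rw [iterAdMul_cons, Module.End.mul_apply]
    exact mem_diffOp_succ.1 (ih hX) a

theorem iterAdMul_apply_mul_lmul (s : Multiset R) (X : Module.End k R) (b : R) :
    iterAdMul k R s (X * Algebra.lmul k R b) = iterAdMul k R s X * Algebra.lmul k R b := by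
  induction s using Multiset.induction_on with
  | empty => simp
  | cons a s ih => rw [iterAdMul_cons, Module.End.mul_apply, ih, adMul_apply_mul_lmul]; rfl

theorem iterAdMul_apply_lmul_mul (s : Multiset R) (X : Module.End k R) (b : R) :
    iterAdMul k R s (Algebra.lmul k R b * X) = Algebra.lmul k R b * iterAdMul k R s X := by
  induction s using Multiset.induction_on with
  | empty => simp
  | cons a s ih => rw [iterAdMul_cons, Module.End.mul_apply, ih, adMul_apply_lmul_mul]; rfl

variable (k) in
/-- `symbol k {a₁, …, aₙ} X = [⋯[X, a₁], …, aₙ](1)`; for `X` of order `n` this is its principal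
symbol evaluated at `da₁ ⋯ daₙ`. -/
noncomputable def symbol (s : Multiset R) : Module.End k R →ₗ[k] R :=
  LinearMap.applyₗ 1 ∘ₗ iterAdMul k R s

theorem symbol_apply (s : Multiset R) (X : Module.End k R) :
    symbol k s X = iterAdMul k R s X 1 := rfl

theorem symbol_cons (a : R) (s : Multiset R) (X : Module.End k R) :
    symbol k (a ::ₘ s) X = symbol k s (adMul k R a X) := by
  rw [symbol_apply, symbol_apply, iterAdMul_cons, (commute_adMul_iterAdMul a s).eq]
  rfl

theorem symbol_mul_lmul {s : Multiset R} {X : Module.End k R}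
    (hX : X ∈ diffOp k R (Multiset.card s)) (b : R) :
    symbol k s (X * Algebra.lmul k R b) = b * symbol k s X := by
  have h0 : iterAdMul k R s X ∈ diffOp k R 0 := iterAdMul_mem_diffOp (by simpa using hX)
  rw [symbol_apply, symbol_apply, iterAdMul_apply_mul_lmul, eq_lmul_apply_one h0]
  simp [mul_comm]

theorem symbol_lmul_mul (s : Multiset R) (X : Module.End k R) (a : R) :
    symbol k s (Algebra.lmul k R a * X) = a * symbol k s X := by
  rw [symbol_apply, symbol_apply, iterAdMul_apply_lmul_mul]
  rfl

theorem symbol_adMul_mul {s : Multiset R} {X : Module.End k R}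
    (hX : X ∈ diffOp k R (Multiset.card s + 1)) (a b : R) :
    symbol k s (adMul k R (a * b) X) =
      a * symbol k s (adMul k R b X) + b * symbol k s (adMul k R a X) := by
  rw [adMul_mul_apply, map_add, symbol_mul_lmul (mem_diffOp_succ.1 hX a), symbol_lmul_mul,
    add_comm]

theorem mem_diffOp_of_symbol_eq_zero {m : ℕ} {P : Module.End k R}
    (hP : P ∈ diffOp k R (m + 1)) (h : ∀ s : Sym R (m + 1), symbol k s P = 0) :
    P ∈ diffOp k R m := by
  induction m generalizing P with
  | zero =>
    refine mem_diffOp_zero_iff.2 fun r => ?_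
    have hr := h (r ::ₛ Sym.nil)
    rw [Sym.coe_cons, Sym.coe_nil, symbol_cons, symbol_apply, iterAdMul_zero,
      Module.End.one_apply] at hr
    rw [eq_lmul_apply_one (mem_diffOp_succ.1 hP r), hr, map_zero]
  | succ m ih =>
    refine mem_diffOp_succ.2 fun r => ih (hP r) fun s => ?_
    rw [← symbol_cons, ← Sym.coe_cons]
    exact h (r ::ₛ s)

theorem symbol_mul_derivation [DecidableEq R] {s : Multiset R} {X : Module.End k R}
    (hX : X ∈ diffOp k R (Multiset.card s - 1)) (E : Derivation k R R) :
    symbol k s (X * (E : Module.End k R)) =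
      (s.map fun a => symbol k (s.erase a) X * E a).sum := by
  induction s using Multiset.induction_on generalizing X with
  | empty => simp [symbol_apply]
  | cons a s ih =>
    rw [Multiset.card_cons, Nat.add_sub_cancel] at hX
    rw [symbol_cons, adMul_apply_mul, adMul_apply_derivation, map_add, symbol_mul_lmul hX,
      ih (adMul_mem_diffOp_pred hX a), Multiset.map_cons, Multiset.sum_cons,
      Multiset.erase_cons_head, mul_comm (E a)]
    congr 2
    refine Multiset.map_congr rfl fun b hb => ?_
    rw [Multiset.erase_cons_tail_of_mem hb, symbol_cons]

variable (k) in
/-- Symmetric multiderivations in `m + 1` arguments: the symmetry is built into `Sym`. -/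
def IsMultiderivation {m : ℕ} (φ : Sym R (m + 1) → R) : Prop :=
  ∀ s : Sym R m, ∃ D : Derivation k R R, ∀ a, D a = φ (a ::ₛ s)

theorem isMultiderivation_symbol {m : ℕ} {P : Module.End k R} (hP : P ∈ diffOp k R (m + 1)) :
    IsMultiderivation k fun s : Sym R (m + 1) => symbol k s P := by
  intro s
  refine ⟨Derivation.mk' (symbol k s ∘ₗ (adMul k R).flip P) fun a b => ?_,
    fun a => ?_⟩
  · simpa using symbol_adMul_mul (by simpa using hP) a b
  · simp [Sym.coe_cons, symbol_cons]

theorem isMultiderivation_comp {m : ℕ} {φ : Sym R (m + 2) → R}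
    {D : Sym R (m + 1) → Derivation k R R} (hD : ∀ w a, D w a = φ (a ::ₛ w))
    (f : Derivation k R R →ₗ[R] R) : IsMultiderivation k fun w => f (D w) := by
  intro t
  have swap (a b : R) : D (b ::ₛ t) a = D (a ::ₛ t) b := by rw [hD, hD, Sym.cons_swap]
  let L : R →ₗ[k] Derivation k R R :=
    { toFun := fun b => D (b ::ₛ t)
      map_add' := fun b c => Derivation.ext fun a => by simp [swap a]
      map_smul' := fun c b => Derivation.ext fun a => by simp [swap a] }
  refine ⟨f.compDer (Derivation.mk' L fun b c => Derivation.ext fun a => ?_), fun b => rfl⟩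
  simp [L, swap a]

theorem symbol_sum_mul_basis [DecidableEq R] {ι : Type*} [Fintype ι]
    (B : Module.Basis ι R (Derivation k R R)) {m : ℕ} {φ : Sym R (m + 2) → R}
    {D : Sym R (m + 1) → Derivation k R R} (hD : ∀ w a, D w a = φ (a ::ₛ w))
    {Q : ι → Module.End k R} (hQ : ∀ i, Q i ∈ diffOp k R (m + 1))
    (hQD : ∀ i (w : Sym R (m + 1)), symbol k w (Q i) = B.coord i (D w)) (s : Sym R (m + 2)) :
    symbol k s (∑ i, Q i * (B i : Module.End k R)) = (m + 2) • φ s := by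
  set t : Multiset R := ↑s
  have hterm : ∀ a ∈ t, ∑ i, symbol k (t.erase a) (Q i) * B i a = φ s := fun a ha => by
    simp only [t, ← Sym.coe_erase ha, hQD, B.sum_coord_mul_apply, hD]
    exact congrArg φ (Sym.cons_erase ha)
  calc symbol k t (∑ i, Q i * (B i : Module.End k R))
      = ∑ i, (t.map fun a => symbol k (t.erase a) (Q i) * B i a).sum := by
        rw [map_sum]
        exact Finset.sum_congr rfl fun i _ => symbol_mul_derivation (by simpa [t] using hQ i) _
    _ = (t.map fun a => ∑ i, symbol k (t.erase a) (Q i) * B i a).sum :=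
        Multiset.sum_map_sum.symm
    _ = (m + 2) • φ s := by
        rw [Multiset.map_congr rfl hterm, Multiset.map_const', Multiset.sum_replicate,
          Sym.card_coe]

end CommRing

section Field

variable {k : Type u} {R : Type v} [Field k] [CharZero k] [CommRing R] [Algebra k R]
  {ι : Type*} [Fintype ι]

theorem exists_mem_adjoin_symbol_eq (B : Module.Basis ι R (Derivation k R R)) (m : ℕ)
    {φ : Sym R (m + 1) → R} (hφ : IsMultiderivation k φ) :
    ∃ Q ∈ Algebra.adjoin k (diffOp k R 1), Q ∈ diffOp k R (m + 1) ∧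
      ∀ s : Sym R (m + 1), symbol k s Q = φ s := by
  induction m with
  | zero =>
    obtain ⟨D, hD⟩ := hφ Sym.nil
    refine ⟨D, Algebra.subset_adjoin (derivation_mem_diffOp_one D),
      derivation_mem_diffOp_one D, fun s => ?_⟩
    obtain ⟨a, s, rfl⟩ := s.exists_eq_cons_of_succ
    rw [Sym.eq_nil_of_card_zero s, ← hD, Sym.coe_cons, Sym.coe_nil, symbol_cons,
      adMul_apply_derivation]
    simp [symbol_apply]
  | succ m ih =>
    choose D hD using hφ
    choose Q hQA hQ hQD using fun i => ih (isMultiderivation_comp hD (B.coord i))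
    classical
    have hB (i : ι) : (B i : Module.End k R) ∈ diffOp k R 1 := derivation_mem_diffOp_one (B i)
    refine ⟨((m + 2 : ℕ) : k)⁻¹ • ∑ i, Q i * (B i : Module.End k R), ?_, ?_, fun s => ?_⟩
    · exact Subalgebra.smul_mem _
        (Subalgebra.sum_mem _ fun i _ => mul_mem (hQA i) (Algebra.subset_adjoin (hB i))) _
    · exact mem_diffOpSubmodule.1 <| Submodule.smul_mem _ _ <| Submodule.sum_mem _ fun i _ =>
        mem_diffOpSubmodule.2 (mul_mem_diffOp (hQ i) (hB i))
    · rw [map_smul, symbol_sum_mul_basis B hD hQ hQD, ← Nat.cast_smul_eq_nsmul k, smul_smul,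
        inv_mul_cancel₀ (Nat.cast_ne_zero.2 (Nat.succ_ne_zero _)), one_smul]

theorem exists_mem_adjoin_sub_mem_diffOp (B : Module.Basis ι R (Derivation k R R)) {m : ℕ}
    {P : Module.End k R} (hP : P ∈ diffOp k R (m + 1)) :
    ∃ Q ∈ Algebra.adjoin k (diffOp k R 1), P - Q ∈ diffOp k R m := by
  obtain ⟨Q, hQA, hQ, hPQ⟩ := exists_mem_adjoin_symbol_eq B m (isMultiderivation_symbol hP)
  refine ⟨Q, hQA, mem_diffOp_of_symbol_eq_zero ?_ fun s => ?_⟩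
  · rw [← mem_diffOpSubmodule] at hP hQ ⊢
    exact sub_mem hP hQ
  · rw [map_sub, hPQ, sub_self]

end Field

end DiffOp

theorem diffOp_generated_by_first_order
    (k : Type u) (R : Type v) [Field k] [CharZero k] [CommRing R] [Algebra k R]
    [IsLocalRing R]
    (hWJ : ∃ n : ℕ, ringKrullDim R = (n : WithBot ℕ∞) ∧
      (∃ x : Fin n → R, Ideal.span (Set.range x) = maximalIdeal R) ∧
      Nonempty (Module.Basis (Fin n) R (Derivation k R R))) :
    ∀ m : ℕ, diffOp k R m ⊆
      (Algebra.adjoin k (diffOp k R 1) : Subalgebra k (Module.End k R)) := by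
  obtain ⟨n, -, -, ⟨B⟩⟩ := hWJ
  intro m
  induction m with
  | zero => exact (DiffOp.diffOp_subset_succ 0).trans Algebra.subset_adjoin
  | succ m ih =>
    intro P hP
    obtain ⟨Q, hQ, hPQ⟩ := DiffOp.exists_mem_adjoin_sub_mem_diffOp B hP
    simpa using add_mem (ih hPQ) hQ
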